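/- arXiv:1506.03404 — 5 statements merged into one kernel-verified Lean document; each statement's English description precedes it below -/
import Mathlib

section
/- Let R be a supertropical semiring and V an arbitrary R-module. Define a binary relation on V by x ≤ y if and only if there exists z ∈ V with x + z = y. Then this relation is a partial order on V; in particular it is antisymmetric: if x + z = y and y + w = x for some z, w ∈ V, then x = y. -/
/-! In a supertropical semiring `e·e = e + e = e`, so the axiom for `ex = ey`, applied to
`x = e` and `y = 1`, gives `e + 1 = e`, that is `3 = 2` in `R`; hence `3•v = 2•v` in every
`R`-module. If `x + z + w = x`, then `x` absorbs every multiple of `u = z + w`, and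
`x + z = x + 2•u + z = x + 3•z + 2•w = x + 2•z + 2•w = x`. -/

open scoped Classical

namespace Supertrop

section Defs

variable (R : Type*) [CommSemiring R]

/-- The distinguished element `e = 1 + 1` of a semiring. -/
def eps : R := 1 + 1

/-- `R` is a supertropical semiring: `e` is additively idempotent, and the two
supertropical addition axioms hold. -/
def IsSupertropical : Prop :=
  eps R + eps R = eps R ∧
    (∀ x y : R, eps R * x ≠ eps R * y → x + y = x ∨ x + y = y) ∧
    (∀ x y : R, eps R * x = eps R * y → x + y = eps R * y)

/-- The ghost ideal `eR`, as a subset of `R`. -/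
def eSet : Set R := Set.range (fun a : R => eps R * a)

/-- The tangible elements `𝒯(R) = R \ eR`. -/
def tangible : Set R := {x : R | x ∉ eSet R}

/-- The nonzero ghost elements `𝒢(R) = eR \ {0}`. -/
def ghost : Set R := eSet R \ {0}

end Defs

section Orders

variable {R : Type*} [CommSemiring R]

/-- The minimal ordering on an additive monoid: `x ≤ y` iff `∃ z, x + z = y`. -/
def mle {M : Type*} [AddCommMonoid M] (x y : M) : Prop := ∃ z, x + z = y

/-- Strict minimal ordering. -/
def mlt {M : Type*} [AddCommMonoid M] (x y : M) : Prop := mle x y ∧ x ≠ y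

/-- The (total) ordering of the bipotent semiring `eR`: `u ≤ v ⟺ u + v = v`. -/
def gle (u v : R) : Prop := u + v = v

/-- The strict ordering of `eR`. -/
def glt (u v : R) : Prop := gle u v ∧ u ≠ v

end Orders

section SSF

variable (R : Type*) [CommSemiring R]

/-- `R` is a supersemifield: supertropical, every tangible element is invertible in `R`,
and `𝒢(R)` is a group under multiplication with identity `e`. -/
def IsSupersemifield : Prop :=
  IsSupertropical R ∧
    (∀ t ∈ tangible R, IsUnit t) ∧
    eps R ∈ ghost R ∧
    (∀ g ∈ ghost R, ∀ h ∈ ghost R, g * h ∈ ghost R) ∧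
    (∀ g ∈ ghost R, ∃ h ∈ ghost R, g * h = eps R)

/-- The supersemifield `R` is tangible: `e·𝒯(R) = 𝒢(R)`. -/
def TangibleSSF : Prop := (fun t => eps R * t) '' tangible R = ghost R

/-- Nontriviality: `𝒢(R) ≠ {e}`. -/
def NontrivialG : Prop := ghost R ≠ {eps R}

/-- `R` is discrete: `𝒢(R)` has a smallest element `> e`. -/
def DiscreteR : Prop :=
  ∃ c ∈ ghost R, glt (eps R) c ∧ ∀ d ∈ ghost R, glt (eps R) d → gle c d

/-- `R` is dense: `𝒢(R)` has no smallest element `> e`. -/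
def DenseR : Prop := ¬ DiscreteR R

/-- `eR` is a semifield: `e ≠ 0`, `𝒢(R)` is closed under multiplication, and every
element of `𝒢(R)` is invertible in `eR` with respect to the identity `e`. -/
def GhostSemifield : Prop :=
  eps R ∈ ghost R ∧
    (∀ g ∈ ghost R, ∀ h ∈ ghost R, g * h ∈ ghost R) ∧
    (∀ g ∈ ghost R, ∃ h ∈ ghost R, g * h = eps R)

end SSF

section Quad

variable {R : Type*} [CommSemiring R] {V : Type*} [AddCommMonoid V] [Module R V]

/-- `b` is a (symmetric bilinear) companion of the quadratic form `q`. -/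
def IsCompanion (q : V → R) (b : V → V → R) : Prop :=
  (∀ x y, b x y = b y x) ∧
    (∀ x y z, b (x + y) z = b x z + b y z) ∧
    (∀ (a : R) (x y : V), b (a • x) y = a * b x y) ∧
    (∀ x y, q (x + y) = q x + q y + b x y)

/-- `(q, b)` is a quadratic pair on `V`. -/
def IsQuadPair (q : V → R) (b : V → V → R) : Prop :=
  (∀ (a : R) (x : V), q (a • x) = a ^ 2 * q x) ∧ IsCompanion q b

/-- `q` is a quadratic form on `V`. -/
def IsQuadForm (q : V → R) : Prop := ∃ b, IsQuadPair q b

/-- `q` is quasilinear (i.e. additive) on the submodule `W`. -/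
def QuasilinearOn (q : V → R) (W : Submodule R V) : Prop :=
  ∀ u ∈ W, ∀ v ∈ W, q (u + v) = q u + q v

/-- `x` is `q`-minimal: `q x' < q x` for every `x' < x` (in the minimal orderings). -/
def QMinimal (q : V → R) (x : V) : Prop := ∀ x' : V, mlt x' x → mlt (q x') (q x)

/-- The maximum of two elements of `R` with respect to the minimal ordering. -/
noncomputable def rsup (a b : R) : R := if a = b then a else a + b

/-- The componentwise maximum `x ∨ y` (in the minimal ordering) of two vectors
of a free module. -/
noncomputable def vsup {ι : Type*} (bV : Module.Basis ι R V) (x y : V) : V :=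
  bV.repr.symm (Finsupp.zipWith rsup (by simp [rsup]) (bV.repr x) (bV.repr y))

/-- The restriction `x(J)` of a vector to a subset `J` of the index set of the base. -/
noncomputable def restrict {ι : Type*} (bV : Module.Basis ι R V) (x : V) (J : Finset ι) : V :=
  ∑ i ∈ J, (bV.repr x) i • bV i

/-- The CS-ratio `CS(x,y) = e·b(x,y)² · (e·q(x)·q(y))⁻¹`, where `inv` is the
inversion of the semifield `eR`. -/
noncomputable def CSratio (q : V → R) (b : V → V → R) (inv : R → R) (x y : V) : R :=
  eps R * (b x y) ^ 2 * inv (eps R * (q x * q y))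

end Quad

namespace IsSupertropical

variable {R : Type*} [CommSemiring R]

theorem eps_mul_eps (hR : IsSupertropical R) : eps R * eps R = eps R := by
  calc eps R * eps R = eps R * 1 + eps R * 1 := by rw [← mul_add]; rfl
    _ = eps R := by rw [mul_one, hR.1]

theorem eps_add_one (hR : IsSupertropical R) : eps R + 1 = eps R := by
  simpa only [mul_one] using hR.2.2 (eps R) 1 (by rw [hR.eps_mul_eps, mul_one])

theorem three_nsmul_eq_two_nsmul (hR : IsSupertropical R) {V : Type*} [AddCommMonoid V]
    [Module R V] (v : V) : 3 • v = 2 • v := by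
  have h : (eps R + 1) • v = eps R • v := by rw [hR.eps_add_one]
  simpa only [eps, add_smul, one_smul, succ_nsmul, zero_nsmul, zero_add] using h

end IsSupertropical

section MinimalOrder

variable {M : Type*} [AddCommMonoid M]

theorem mle_refl (x : M) : mle x x := ⟨0, add_zero x⟩

theorem mle_trans {x y z : M} : mle x y → mle y z → mle x z := by
  rintro ⟨a, rfl⟩ ⟨b, rfl⟩
  exact ⟨a + b, (add_assoc x a b).symm⟩

theorem add_nsmul_eq_self {x u : M} (h : x + u = x) (n : ℕ) : x + n • u = x := by
  induction n with
  | zero => rw [zero_nsmul, add_zero]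
  | succ n ih => rw [succ_nsmul, ← add_assoc, ih, h]

theorem eq_of_add_eq_of_add_eq (h3 : ∀ v : M, 3 • v = 2 • v) {x y z w : M}
    (hz : x + z = y) (hw : y + w = x) : x = y := by
  have hx : x + 2 • (z + w) = x := add_nsmul_eq_self (by rw [← add_assoc, hz, hw]) 2
  symm
  calc y = x + 2 • (z + w) + z := by rw [hx, hz]
    _ = x + (3 • z + 2 • w) := by rw [nsmul_add]; abel
    _ = x + 2 • (z + w) := by rw [h3, nsmul_add]
    _ = x := hx

theorem mle_antisymm (h3 : ∀ v : M, 3 • v = 2 • v) {x y : M} : mle x y → mle y x → x = y :=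
  fun ⟨_, hz⟩ ⟨_, hw⟩ => eq_of_add_eq_of_add_eq h3 hz hw

end MinimalOrder

/-- The minimal ordering `x ≤ y ⟺ ∃ z, x + z = y` on any module `V`
over a supertropical semiring `R` is a partial order: reflexive, transitive and
antisymmetric; in particular if `x + z = y` and `y + w = x` then `x = y`. -/
theorem stmt0 {R : Type*} [CommSemiring R] (hR : IsSupertropical R)
    {V : Type*} [AddCommMonoid V] [Module R V] :
    (∀ x : V, mle x x) ∧
    (∀ x y z : V, mle x y → mle y z → mle x z) ∧
    (∀ x y : V, mle x y → mle y x → x = y) ∧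
    (∀ x y z w : V, x + z = y → y + w = x → x = y) :=
  ⟨mle_refl, fun _ _ _ => mle_trans, fun _ _ => mle_antisymm hR.three_nsmul_eq_two_nsmul,
    fun _ _ _ _ => eq_of_add_eq_of_add_eq hR.three_nsmul_eq_two_nsmul⟩

end Supertrop
end

section
/- Let R be a supertropical semiring with its minimal ordering (x ≤ y iff ∃z, x+z = y; x < y means x ≤ y and x ≠ y). Then: (a) for x ∈ eR and any y ∈ R, x and y are comparable, and (x < y ⟺ ex < ey), while (y < x ⟺ either ey < ex, or (y ∈ 𝒯(R) and ey = ex)); (b) for x ∈ 𝒯(R) and y ∈ R, (x < y ⟺ either ex < ey, or (ex = ey and y ∈ eR)), and (y < x ⟺ ey < ex); consequently x ∈ 𝒯(R) and y are incomparable exactly when y ∈ 𝒯(R), x ≠ y, and ex = ey. -/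
/-!
If `x + z = y`, the supertropical axioms leave only `y = x`, `y = z` or `y = e z = e x`; in each
case `x = y` or `x + y = y`. So `x ≤ y` in the minimal ordering means `x = y` or `x + y = y`, and
`x + y = y` holds exactly when `e x < e y`, or `e x = e y` with `y` ghost. Both parts of the theorem
are then read off from the trichotomy of `e x` and `e y` in the totally ordered `eR`, using that a
ghost element is determined by its `ν`-value `e x = x`.
-/

open scoped Classical

namespace Supertrop

section

variable {R : Type*} [CommSemiring R]

theorem mem_tangible {x : R} : x ∈ tangible R ↔ x ∉ eSet R := Iff.rfl

theorem ne_of_glt_eps_mul {x y : R} (h : glt (eps R * x) (eps R * y)) : x ≠ y := by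
  rintro rfl
  exact h.2 rfl

end

namespace IsSupertropical

variable {R : Type*} [CommSemiring R]

theorem eps_mul_eps_mul (hR : IsSupertropical R) (a : R) : eps R * (eps R * a) = eps R * a := by
  rw [← mul_assoc, hR.eps_mul_eps]

theorem mem_eSet_iff (hR : IsSupertropical R) {y : R} : y ∈ eSet R ↔ eps R * y = y := by
  constructor
  · rintro ⟨a, rfl⟩
    exact hR.eps_mul_eps_mul a
  · intro h
    exact ⟨y, h⟩

theorem eq_of_eps_mul_eq (hR : IsSupertropical R) {x y : R} (hx : x ∈ eSet R) (hy : y ∈ eSet R)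
    (h : eps R * x = eps R * y) : x = y := by
  rwa [hR.mem_eSet_iff.1 hx, hR.mem_eSet_iff.1 hy] at h

theorem glt_trichotomy (hR : IsSupertropical R) (x y : R) :
    glt (eps R * x) (eps R * y) ∨ eps R * x = eps R * y ∨ glt (eps R * y) (eps R * x) := by
  by_cases h : eps R * x = eps R * y
  · exact Or.inr (Or.inl h)
  have h' : eps R * (eps R * x) ≠ eps R * (eps R * y) := by
    rwa [hR.eps_mul_eps_mul, hR.eps_mul_eps_mul]
  rcases hR.2.1 _ _ h' with hsum | hsum
  · exact Or.inr (Or.inr ⟨by unfold gle; rwa [add_comm], Ne.symm h⟩)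
  · exact Or.inl ⟨hsum, h⟩

theorem mle_iff_eq_or_add_eq (hR : IsSupertropical R) {x y : R} :
    mle x y ↔ x = y ∨ x + y = y := by
  constructor
  · rintro ⟨z, rfl⟩
    by_cases h : eps R * x = eps R * z
    · have hxz : x + z = eps R * z := hR.2.2 x z h
      have hghost : eps R * x = eps R * (eps R * z) := by rw [hR.eps_mul_eps_mul, h]
      right
      rw [hxz, hR.2.2 x _ hghost, hR.eps_mul_eps_mul]
    · rcases hR.2.1 x z h with hsum | hsum
      · exact Or.inl hsum.symm
      · right
        rw [hsum]
        exact hsum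
  · rintro (rfl | h)
    · exact ⟨0, add_zero x⟩
    · exact ⟨y, h⟩

theorem add_eq_right_iff (hR : IsSupertropical R) {x y : R} :
    x + y = y ↔ glt (eps R * x) (eps R * y) ∨ (eps R * x = eps R * y ∧ y ∈ eSet R) := by
  rw [hR.mem_eSet_iff]
  constructor
  · intro h
    by_cases hxy : eps R * x = eps R * y
    · exact Or.inr ⟨hxy, by rw [← hR.2.2 x y hxy, h]⟩
    · exact Or.inl ⟨by unfold gle; rw [← mul_add, h], hxy⟩
  · rintro (⟨hle, hne⟩ | ⟨hxy, hy⟩)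
    · rcases hR.2.1 x y hne with hsum | hsum
      · refine absurd ?_ hne
        rw [← hle, ← mul_add, hsum]
      · exact hsum
    · rw [hR.2.2 x y hxy, hy]

theorem mle_iff (hR : IsSupertropical R) {x y : R} :
    mle x y ↔
      x = y ∨ glt (eps R * x) (eps R * y) ∨ (eps R * x = eps R * y ∧ y ∈ eSet R) := by
  rw [hR.mle_iff_eq_or_add_eq, hR.add_eq_right_iff]

theorem mlt_iff (hR : IsSupertropical R) {x y : R} :
    mlt x y ↔
      glt (eps R * x) (eps R * y) ∨ (eps R * x = eps R * y ∧ y ∈ eSet R ∧ x ≠ y) := by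
  unfold mlt
  rw [hR.mle_iff]
  constructor
  · rintro ⟨rfl | hlt | ⟨hxy, hy⟩, hne⟩
    · exact absurd rfl hne
    · exact Or.inl hlt
    · exact Or.inr ⟨hxy, hy, hne⟩
  · rintro (hlt | ⟨hxy, hy, hne⟩)
    · exact ⟨Or.inr (Or.inl hlt), ne_of_glt_eps_mul hlt⟩
    · exact ⟨Or.inr (Or.inr ⟨hxy, hy⟩), hne⟩

theorem not_mle_and_not_mle_iff (hR : IsSupertropical R) {x y : R} :
    (¬ mle x y ∧ ¬ mle y x) ↔
      x ∈ tangible R ∧ y ∈ tangible R ∧ x ≠ y ∧ eps R * x = eps R * y := by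
  simp only [mem_tangible, hR.mle_iff]
  rcases hR.glt_trichotomy x y with hlt | hxy | hgt
  · simp only [hlt, true_or, or_true, not_true_eq_false, false_and, hlt.2, and_false]
  · have hirr : ¬ glt (eps R * x) (eps R * y) := fun h => h.2 hxy
    have hirr' : ¬ glt (eps R * y) (eps R * x) := fun h => h.2 hxy.symm
    simp only [hirr, hirr', and_iff_right hxy, and_iff_right hxy.symm, false_or, not_or,
      eq_comm (a := y)]
    tauto
  · simp only [hgt, true_or, or_true, not_true_eq_false, and_false, Ne.symm hgt.2]

theorem mle_or_mle_of_mem_eSet (hR : IsSupertropical R) {x : R} (hx : x ∈ eSet R) (y : R) :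
    mle x y ∨ mle y x := by
  by_contra h
  exact (hR.not_mle_and_not_mle_iff.1 (not_or.1 h)).1 hx

theorem mlt_iff_of_mem_eSet_left (hR : IsSupertropical R) {x : R} (hx : x ∈ eSet R) (y : R) :
    mlt x y ↔ glt (eps R * x) (eps R * y) := by
  rw [hR.mlt_iff, or_iff_left_iff_imp]
  rintro ⟨hxy, hy, hne⟩
  exact absurd (hR.eq_of_eps_mul_eq hx hy hxy) hne

theorem mlt_iff_of_mem_eSet_right (hR : IsSupertropical R) {x : R} (hx : x ∈ eSet R) (y : R) :
    mlt y x ↔ glt (eps R * y) (eps R * x) ∨ (y ∈ tangible R ∧ eps R * y = eps R * x) := by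
  rw [hR.mlt_iff]
  exact or_congr Iff.rfl
    ⟨fun ⟨hyx, _, hne⟩ => ⟨fun hy => hne (hR.eq_of_eps_mul_eq hy hx hyx), hyx⟩,
      fun ⟨hy, hyx⟩ => ⟨hyx, hx, fun h => hy (h ▸ hx)⟩⟩

theorem mlt_iff_of_mem_tangible_left (hR : IsSupertropical R) {x : R} (hx : x ∈ tangible R)
    (y : R) :
    mlt x y ↔ glt (eps R * x) (eps R * y) ∨ (eps R * x = eps R * y ∧ y ∈ eSet R) := by
  rw [hR.mlt_iff]
  exact or_congr Iff.rfl ⟨fun ⟨hxy, hy, _⟩ => ⟨hxy, hy⟩,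
    fun ⟨hxy, hy⟩ => ⟨hxy, hy, fun h => hx (h ▸ hy)⟩⟩

theorem mlt_iff_of_mem_tangible_right (hR : IsSupertropical R) {x : R} (hx : x ∈ tangible R)
    (y : R) :
    mlt y x ↔ glt (eps R * y) (eps R * x) := by
  rw [hR.mlt_iff, or_iff_left_iff_imp]
  rintro ⟨_, hx', _⟩
  exact absurd hx' hx

end IsSupertropical

/-- description of the minimal ordering of a supertropical semiring in
terms of the `ν`-dominance relation, the ghost ideal `eR` and the tangible elements. -/
theorem stmt1 {R : Type*} [CommSemiring R] (hR : IsSupertropical R) :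
    (∀ x ∈ eSet R, ∀ y : R,
      (mle x y ∨ mle y x) ∧
      (mlt x y ↔ glt (eps R * x) (eps R * y)) ∧
      (mlt y x ↔ (glt (eps R * y) (eps R * x) ∨
        (y ∈ tangible R ∧ eps R * y = eps R * x)))) ∧
    (∀ x ∈ tangible R, ∀ y : R,
      (mlt x y ↔ (glt (eps R * x) (eps R * y) ∨
        (eps R * x = eps R * y ∧ y ∈ eSet R))) ∧
      (mlt y x ↔ glt (eps R * y) (eps R * x)) ∧
      ((¬ mle x y ∧ ¬ mle y x) ↔
        (y ∈ tangible R ∧ x ≠ y ∧ eps R * x = eps R * y))) := by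
  refine ⟨fun x hx y => ⟨hR.mle_or_mle_of_mem_eSet hx y, hR.mlt_iff_of_mem_eSet_left hx y,
    hR.mlt_iff_of_mem_eSet_right hx y⟩, fun x hx y => ⟨hR.mlt_iff_of_mem_tangible_left hx y,
    hR.mlt_iff_of_mem_tangible_right hx y, ?_⟩⟩
  rw [hR.not_mle_and_not_mle_iff]
  exact and_iff_right hx

end Supertrop
end

section
/- Let R be a supertropical semiring, q a quadratic form on an R-module V, and x, y ∈ V. Then the following are equivalent: (i) q(λx + μy) = q(λx) + q(μy) for all λ, μ ∈ R; (ii) q is quasilinear on the submodule Rx + Ry, i.e. q(u+v) = q(u) + q(v) for all u, v ∈ Rx + Ry. -/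
open scoped Classical

namespace Supertrop

/-! Squaring is additive in a supertropical semiring, `(a + b)² = a² + b²`: either `a + b` is
one of the summands, which then absorbs all cross terms, or `e a = e b` and both sides equal
`e b²`. Hence under (i) `q (a • x + c • y) = a² q x + c² q y` is additive in `(a, c)`, which is (ii);
conversely `a • x` and `c • y` lie in `Rx + Ry`. -/

theorem add_sq_of_add_eq_left {R : Type*} [CommSemiring R] {a b : R} (h : a + b = a) :
    (a + b) ^ 2 = a ^ 2 + b ^ 2 := by
  have absorb_ab : a ^ 2 + a * b = a ^ 2 := by
    calc a ^ 2 + a * b = a * (a + b) := by ring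
      _ = a ^ 2 := by rw [h]; ring
  have absorb_sq : a * b + b ^ 2 = a * b := by
    calc a * b + b ^ 2 = (a + b) * b := by ring
      _ = a * b := by rw [h]
  calc (a + b) ^ 2 = a ^ 2 + (a * b + b ^ 2) := by rw [h, absorb_sq, absorb_ab]
    _ = a ^ 2 + b ^ 2 := by rw [← add_assoc, absorb_ab]

namespace IsSupertropical

variable {R : Type*} [CommSemiring R]

theorem eps_mul_sq (hR : IsSupertropical R) (a : R) : eps R * a ^ 2 = (eps R * a) ^ 2 := by
  rw [mul_pow, sq (eps R), hR.eps_mul_eps]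

theorem add_sq (hR : IsSupertropical R) (a b : R) : (a + b) ^ 2 = a ^ 2 + b ^ 2 := by
  by_cases hab : eps R * a = eps R * b
  · have hsq : eps R * a ^ 2 = eps R * b ^ 2 := by
      rw [hR.eps_mul_sq, hR.eps_mul_sq, hab]
    rw [hR.2.2 a b hab, hR.2.2 _ _ hsq, ← hR.eps_mul_sq]
  · rcases hR.2.1 a b hab with h | h
    · exact add_sq_of_add_eq_left h
    · rw [add_comm] at h ⊢
      rw [add_comm (a ^ 2)]
      exact add_sq_of_add_eq_left h

end IsSupertropical

theorem quasilinearOn_span_pair {R : Type*} [CommSemiring R] (hR : IsSupertropical R)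
    {V : Type*} [AddCommMonoid V] [Module R V] {q : V → R} {x y : V}
    (hpair : ∀ a c : R, q (a • x + c • y) = a ^ 2 * q x + c ^ 2 * q y) :
    QuasilinearOn q (Submodule.span R {x, y}) := by
  intro u hu v hv
  obtain ⟨a, c, rfl⟩ := Submodule.mem_span_pair.mp hu
  obtain ⟨a', c', rfl⟩ := Submodule.mem_span_pair.mp hv
  have hsum : (a • x + c • y) + (a' • x + c' • y) = (a + a') • x + (c + c') • y := by
    rw [add_smul, add_smul]; abel
  rw [hsum, hpair, hpair, hpair, hR.add_sq, hR.add_sq]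
  ring

/-- `q(λx + μy) = q(λx) + q(μy)` for all scalars `λ, μ` iff `q` is
quasilinear on the submodule `Rx + Ry`. -/
theorem stmt2 {R : Type*} [CommSemiring R] (hR : IsSupertropical R)
    {V : Type*} [AddCommMonoid V] [Module R V] (q : V → R) (hq : IsQuadForm q)
    (x y : V) :
    (∀ a c : R, q (a • x + c • y) = q (a • x) + q (c • y)) ↔
      QuasilinearOn q (Submodule.span R {x, y}) := by
  obtain ⟨_, hscale, _⟩ := hq
  constructor
  · intro h
    refine quasilinearOn_span_pair hR fun a c => ?_
    rw [h, hscale, hscale]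
  · intro h a c
    exact h (a • x) (Submodule.smul_mem _ a (Submodule.subset_span (by simp)))
      (c • y) (Submodule.smul_mem _ c (Submodule.subset_span (by simp)))

end Supertrop
end

section
/- Let R be a nontrivial tangible supersemifield which is dense, and let (q,b) be a quadratic pair on an R-module V. For any x, y ∈ V: q is quasilinear on Rx + Ry if and only if e·b(x,y)² ≤ e·q(x)·q(y) in the totally ordered set eR. Moreover, if e·b(x,y)² > e·q(x)·q(y), then q is rigid at (x,y), i.e. every companion b' of q satisfies b'(x,y) = b(x,y). -/
open scoped Classical

namespace Supertrop

/-!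
Write `ν(a) = e·a`. The nonzero ghost values form a totally ordered group, and an element `s` is
absorbed by a sum, `s + (p + q) = p + q`, as soon as `ν(s)² ≤ ν(p)·ν(q)`. For `u, v ∈ Rx + Ry`
all cross terms of `q(u + v)` are of this kind when `ν(b(x,y))² ≤ ν(q(x)q(y))`, hence
`q(u + v) = q(u) + q(v)`. If instead `ν(b(x,y))² > ν(q(x)q(y))`, nontriviality and density of
`𝒢(R)` provide a tangible `a` with `ν(q(x)), ν(a²q(y)) < ν(a·b(x,y))`. In
`q(x + ay) = q(x) + a²q(y) + a·b(x,y)` the last summand then dominates strictly: it is not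
absorbed, so `q` is not quasilinear, and it is determined by `q(x + ay)`, so `b(x,y)` is rigid.
-/

section Order

variable {R : Type*} [CommSemiring R] {a b c : R}

theorem gle.trans (h₁ : gle a b) (h₂ : gle b c) : gle a c := by
  unfold gle at *
  rw [← h₂, ← add_assoc, h₁]

theorem gle.antisymm (h₁ : gle a b) (h₂ : gle b a) : a = b := by
  unfold gle at *
  rw [← h₂, add_comm, h₁]

theorem gle.add (h₁ : gle a c) (h₂ : gle b c) : gle (a + b) c := by
  unfold gle at *
  rw [add_assoc, h₂, h₁]

theorem gle.add_right (h : gle a b) (c : R) : gle a (b + c) := by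
  unfold gle at *
  rw [← add_assoc, h]

theorem gle.mul_left (h : gle a b) (c : R) : gle (c * a) (c * b) := by
  unfold gle at *
  rw [← mul_add, h]

theorem glt.not_gle (h : glt a b) : ¬ gle b a := fun h' => h.2 (h.1.antisymm h')

theorem zero_glt (ha : a ≠ 0) : glt 0 a := ⟨zero_add a, ha.symm⟩

theorem glt.ne_zero (h : glt a b) : b ≠ 0 := by
  rintro rfl
  exact h.2 ((add_zero a).symm.trans h.1)

theorem mul_eps_of_eps_mul_eq (ha : eps R * a = a) : a * eps R = a := by
  rw [mul_comm, ha]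

end Order

section Supertropical

variable {R : Type*} [CommSemiring R] {a b c : R}

theorem IsSupertropical.eps_mul_eps_s3 (hS : IsSupertropical R) : eps R * eps R = eps R :=
  calc eps R * eps R = eps R + eps R := by unfold eps; ring
    _ = eps R := hS.1

theorem IsSupertropical.eps_mul_eps_mul_s3 (hS : IsSupertropical R) (a : R) :
    eps R * (eps R * a) = eps R * a := by
  rw [← mul_assoc, hS.eps_mul_eps_s3]

theorem IsSupertropical.eps_mul_mul_eps_mul (hS : IsSupertropical R) (a b : R) :
    eps R * a * (eps R * b) = eps R * (a * b) := by
  rw [mul_mul_mul_comm, hS.eps_mul_eps_s3]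

theorem IsSupertropical.eps_mul_of_mem_eSet (hS : IsSupertropical R) (ha : a ∈ eSet R) :
    eps R * a = a := by
  obtain ⟨a, rfl⟩ := ha
  exact hS.eps_mul_eps_mul_s3 a

theorem IsSupertropical.gle_refl (hS : IsSupertropical R) (ha : eps R * a = a) : gle a a := by
  unfold gle
  rw [hS.2.2 a a rfl, ha]

theorem IsSupertropical.add_eq_or (hS : IsSupertropical R) (hb : eps R * b = b) :
    a + b = a ∨ a + b = b := by
  by_cases h : eps R * a = eps R * b
  · exact Or.inr (by rw [hS.2.2 a b h, hb])
  · exact hS.2.1 a b h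

theorem IsSupertropical.gle_total (hS : IsSupertropical R) (hb : eps R * b = b) :
    gle a b ∨ gle b a := by
  rcases hS.add_eq_or hb with h | h
  · exact Or.inr (by unfold gle; rwa [add_comm])
  · exact Or.inl h

theorem IsSupertropical.glt_or_gle (hS : IsSupertropical R) (hb : eps R * b = b) :
    glt a b ∨ gle b a := by
  rcases eq_or_ne a b with rfl | hne
  · exact Or.inr (hS.gle_refl hb)
  · exact (hS.gle_total hb).imp (fun h => ⟨h, hne⟩) id

theorem IsSupertropical.glt_add (hS : IsSupertropical R) (hb : eps R * b = b) (h₁ : glt a c)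
    (h₂ : glt b c) : glt (a + b) c := by
  rcases hS.add_eq_or hb with h | h <;> rwa [h]

theorem IsSupertropical.add_eq_right_of_glt (hS : IsSupertropical R)
    (h : glt (eps R * a) (eps R * b)) : a + b = b := by
  refine (hS.2.1 a b h.2).resolve_left fun hab => h.2 ?_
  rw [← h.1, ← mul_add, hab]

theorem IsSupertropical.add_ne_left_of_glt (hS : IsSupertropical R)
    (h : glt (eps R * a) (eps R * b)) : a + b ≠ a := by
  rw [hS.add_eq_right_of_glt h]
  exact fun hba => h.2 (by rw [hba])

theorem IsSupertropical.eq_of_eq_add_of_glt (hS : IsSupertropical R)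
    (h : glt (eps R * a) (eps R * b)) (hb : b = a + c) : c = b := by
  have hν : eps R * b = eps R * a + eps R * c := by rw [hb, mul_add]
  have hbc : eps R * b = eps R * c := by
    rcases hS.add_eq_or (hS.eps_mul_eps_mul_s3 c) with h' | h'
    · exact absurd (hν.trans h').symm h.2
    · exact hν.trans h'
  rw [hb, hS.add_eq_right_of_glt (by rwa [← hbc])]

end Supertropical

section Supersemifield

variable {R : Type*} [CommSemiring R] {a b c : R}

theorem IsSupersemifield.eps_mem_ghost (hR : IsSupersemifield R) : eps R ∈ ghost R := hR.2.2.1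

theorem IsSupersemifield.mul_mem_ghost (hR : IsSupersemifield R) (ha : a ∈ ghost R)
    (hb : b ∈ ghost R) : a * b ∈ ghost R :=
  hR.2.2.2.1 a ha b hb

theorem IsSupersemifield.exists_mul_eq_eps (hR : IsSupersemifield R) (ha : a ∈ ghost R) :
    ∃ b ∈ ghost R, a * b = eps R :=
  hR.2.2.2.2 a ha

theorem IsSupersemifield.eps_mul_of_mem_ghost (hR : IsSupersemifield R) (ha : a ∈ ghost R) :
    eps R * a = a :=
  hR.1.eps_mul_of_mem_eSet ha.1

theorem IsSupersemifield.eps_mul_eq_of_mul_eq (hR : IsSupersemifield R) (hc : c ≠ 0)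
    (h : c * a = c * b) : eps R * a = eps R * b := by
  by_cases hce : c ∈ eSet R
  · obtain ⟨d, -, hcd⟩ := hR.exists_mul_eq_eps ⟨hce, hc⟩
    rw [← hcd, mul_comm c, mul_assoc, mul_assoc, h]
  · rw [(hR.2.1 c hce).mul_left_cancel h]

theorem IsSupersemifield.glt_mul_left (hR : IsSupersemifield R) (hc : c ≠ 0)
    (ha : eps R * a = a) (hb : eps R * b = b) (h : glt a b) : glt (c * a) (c * b) :=
  ⟨h.1.mul_left c, fun hab => h.2 (by rw [← ha, ← hb, hR.eps_mul_eq_of_mul_eq hc hab])⟩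

theorem IsSupersemifield.gle_add_of_gle_mul (hR : IsSupersemifield R) {p q s : R}
    (h : gle (eps R * (s * s)) (eps R * (p * q))) : gle s (p + q) := by
  have hS := hR.1
  wlog hpq : gle (eps R * p) (eps R * q) generalizing p q
  · rw [add_comm]
    refine this (by rwa [mul_comm q p]) ?_
    exact (hS.gle_total (hS.eps_mul_eps_mul_s3 q)).resolve_left hpq
  rw [← hS.eps_mul_mul_eps_mul s s, ← hS.eps_mul_mul_eps_mul p q] at h
  have hsum : eps R * (p + q) = eps R * q := by rw [mul_add]; exact hpq
  set P := eps R * p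
  set Q := eps R * q
  set S := eps R * s
  have hP : eps R * P = P := hS.eps_mul_eps_mul_s3 p
  have hQ : eps R * Q = Q := hS.eps_mul_eps_mul_s3 q
  have hS' : eps R * S = S := hS.eps_mul_eps_mul_s3 s
  -- `S > Q` would give `S² > Q² ≥ PQ`; and `S = Q` forces `P = Q`, making `p + q` ghost.
  rcases hS.glt_or_gle hQ (a := S) with hSQ | hQS
  · exact hS.add_eq_right_of_glt (by rwa [hsum])
  by_cases hQS' : Q = S
  · have hPQ : P = Q := by
      by_contra hne
      refine (hR.glt_mul_left (glt.ne_zero ⟨hpq, hne⟩) hP hQ ⟨hpq, hne⟩).not_gle ?_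
      rw [← hQS'] at h
      rwa [mul_comm Q P]
    unfold gle
    rw [hS.2.2 p q hPQ, hS.2.2 s Q (by rw [hQ, hQS']), hQ]
  · have hlt : glt (Q * S) (S * S) := by
      rw [mul_comm Q S]
      exact hR.glt_mul_left (glt.ne_zero ⟨hQS, hQS'⟩) hQ hS' ⟨hQS, hQS'⟩
    have hle : gle (S * S) (Q * S) :=
      (h.trans (by rw [mul_comm P Q]; exact hpq.mul_left Q)).trans (hQS.mul_left Q)
    exact absurd hle hlt.not_gle

end Supersemifield

section BinaryForm

variable {R : Type*} [CommSemiring R]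

def binaryForm (α β γ a c : R) : R := a ^ 2 * α + c ^ 2 * β + a * c * γ

theorem IsSupersemifield.binaryForm_add (hR : IsSupersemifield R) {α β γ : R}
    (h : gle (eps R * γ ^ 2) (eps R * (α * β))) (a₁ a₂ c₁ c₂ : R) :
    binaryForm α β γ (a₁ + c₁) (a₂ + c₂) = binaryForm α β γ a₁ a₂ + binaryForm α β γ c₁ c₂ := by
  have hS := hR.1
  have square_term : ∀ {t p q : R}, t * t = p * q → gle (eps R * t) (p + q) := fun htpq =>
    hR.gle_add_of_gle_mul (by
      rw [hS.eps_mul_mul_eps_mul, hS.eps_mul_eps_mul_s3, htpq]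
      exact hS.gle_refl (hS.eps_mul_eps_mul_s3 _))
  have cross_term : ∀ (k : R) {p q : R}, k ^ 2 * (α * β) = p * q → gle (k * γ) (p + q) :=
    fun k _ _ hpq => hR.gle_add_of_gle_mul (by
      convert h.mul_left (k ^ 2) using 1
      · ring
      · rw [← hpq]; ring)
  have widen : ∀ {s p : R} (r : R), gle s p →
      p + r = binaryForm α β γ a₁ a₂ + binaryForm α β γ c₁ c₂ →
      gle s (binaryForm α β γ a₁ a₂ + binaryForm α β γ c₁ c₂) :=
    fun r hs hr => hr ▸ hs.add_right r
  have hexp : binaryForm α β γ (a₁ + c₁) (a₂ + c₂) =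
      binaryForm α β γ a₁ a₂ + binaryForm α β γ c₁ c₂ +
        (eps R * (a₁ * c₁ * α) + eps R * (a₂ * c₂ * β) + a₁ * c₂ * γ + c₁ * a₂ * γ) := by
    unfold binaryForm eps; ring
  have h₁ : gle (eps R * (a₁ * c₁ * α)) (a₁ ^ 2 * α + c₁ ^ 2 * α) := square_term (by ring)
  have h₂ : gle (eps R * (a₂ * c₂ * β)) (a₂ ^ 2 * β + c₂ ^ 2 * β) := square_term (by ring)
  have h₃ : gle (a₁ * c₂ * γ) (a₁ ^ 2 * α + c₂ ^ 2 * β) := cross_term _ (by ring)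
  have h₄ : gle (c₁ * a₂ * γ) (c₁ ^ 2 * α + a₂ ^ 2 * β) := cross_term _ (by ring)
  rw [hexp, add_comm]
  refine (((widen (a₂ ^ 2 * β + c₂ ^ 2 * β + a₁ * a₂ * γ + c₁ * c₂ * γ) h₁ ?_).add
    (widen (a₁ ^ 2 * α + c₁ ^ 2 * α + a₁ * a₂ * γ + c₁ * c₂ * γ) h₂ ?_)).add
    (widen (c₁ ^ 2 * α + a₂ ^ 2 * β + a₁ * a₂ * γ + c₁ * c₂ * γ) h₃ ?_)).add
    (widen (a₁ ^ 2 * α + c₂ ^ 2 * β + a₁ * a₂ * γ + c₁ * c₂ * γ) h₄ ?_) <;>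
  · unfold binaryForm; ring

end BinaryForm

section GhostGroup

variable {R : Type*} [CommSemiring R] {A B C : R}

theorem IsSupersemifield.exists_eps_glt (hR : IsSupersemifield R) (hnt : NontrivialG R) :
    ∃ d ∈ ghost R, glt (eps R) d := by
  obtain ⟨g, hg, hge⟩ : ∃ g ∈ ghost R, g ≠ eps R := by
    by_contra! hall
    exact hnt (Set.eq_singleton_iff_unique_mem.mpr ⟨hR.eps_mem_ghost, hall⟩)
  rcases hR.1.glt_or_gle (a := eps R) (hR.eps_mul_of_mem_ghost hg) with hlt | hle
  · exact ⟨g, hg, hlt⟩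
  obtain ⟨g', hg', hgg'⟩ := hR.exists_mul_eq_eps hg
  refine ⟨g', hg', ?_⟩
  have := hR.glt_mul_left hg'.2 (hR.eps_mul_of_mem_ghost hg) hR.1.eps_mul_eps_s3 ⟨hle, hge⟩
  rwa [mul_comm g' g, hgg', mul_eps_of_eps_mul_eq (hR.eps_mul_of_mem_ghost hg')] at this

theorem IsSupersemifield.exists_glt_eps (hR : IsSupersemifield R) (hnt : NontrivialG R) :
    ∃ d ∈ ghost R, glt d (eps R) := by
  obtain ⟨d, hd, hed⟩ := hR.exists_eps_glt hnt
  obtain ⟨d', hd', hdd'⟩ := hR.exists_mul_eq_eps hd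
  refine ⟨d', hd', ?_⟩
  have := hR.glt_mul_left hd'.2 hR.1.eps_mul_eps_s3 (hR.eps_mul_of_mem_ghost hd) hed
  rwa [mul_comm d' d, hdd', mul_eps_of_eps_mul_eq (hR.eps_mul_of_mem_ghost hd')] at this

theorem IsSupersemifield.exists_ghost_between (hR : IsSupersemifield R) (hdense : DenseR R) {g h : R}
    (hg : g ∈ ghost R) (hh : h ∈ ghost R) (hgh : glt g h) :
    ∃ m ∈ ghost R, glt g m ∧ glt m h := by
  obtain ⟨g', hg', hgg'⟩ := hR.exists_mul_eq_eps hg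
  have hk : h * g' ∈ ghost R := hR.mul_mem_ghost hh hg'
  have hek : glt (eps R) (h * g') := by
    have := hR.glt_mul_left hg'.2 (hR.eps_mul_of_mem_ghost hg) (hR.eps_mul_of_mem_ghost hh) hgh
    rwa [mul_comm g' g, hgg', mul_comm] at this
  obtain ⟨d, hd, hed, hkd⟩ : ∃ d ∈ ghost R, glt (eps R) d ∧ ¬ gle (h * g') d := by
    by_contra! hmin
    exact hdense ⟨_, hk, hek, hmin⟩
  have hdk := (hR.1.glt_or_gle (hR.eps_mul_of_mem_ghost hk)).resolve_right hkd
  refine ⟨g * d, hR.mul_mem_ghost hg hd, ?_, ?_⟩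
  · convert hR.glt_mul_left hg.2 hR.1.eps_mul_eps_s3 (hR.eps_mul_of_mem_ghost hd) hed using 1
    exact (mul_eps_of_eps_mul_eq (hR.eps_mul_of_mem_ghost hg)).symm
  · convert hR.glt_mul_left hg.2 (hR.eps_mul_of_mem_ghost hd) (hR.eps_mul_of_mem_ghost hk) hdk
      using 1
    rw [mul_left_comm, hgg', mul_eps_of_eps_mul_eq (hR.eps_mul_of_mem_ghost hh)]

theorem IsSupersemifield.exists_ghost_glt_mul (hR : IsSupersemifield R) (hnt : NontrivialG R)
    (hA : eps R * A = A) (hC : C ∈ ghost R) : ∃ m ∈ ghost R, glt A (m * C) := by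
  by_cases hA0 : A = 0
  · refine ⟨eps R, hR.eps_mem_ghost, ?_⟩
    rw [hA0, hR.eps_mul_of_mem_ghost hC]
    exact zero_glt hC.2
  obtain ⟨d, hd, hed⟩ := hR.exists_eps_glt hnt
  obtain ⟨C', hC', hCC'⟩ := hR.exists_mul_eq_eps hC
  refine ⟨A * C' * d, hR.mul_mem_ghost (hR.mul_mem_ghost ⟨⟨A, hA⟩, hA0⟩ hC') hd, ?_⟩
  convert hR.glt_mul_left hA0 hR.1.eps_mul_eps_s3 (hR.eps_mul_of_mem_ghost hd) hed using 1
  · exact (mul_eps_of_eps_mul_eq hA).symm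
  · rw [show A * C' * d * C = A * (eps R * d) by rw [← hCC']; ring, hR.eps_mul_of_mem_ghost hd]

theorem IsSupersemifield.exists_ghost_mul_glt (hR : IsSupersemifield R) (hnt : NontrivialG R)
    (hB : eps R * B = B) (hC : C ∈ ghost R) : ∃ m ∈ ghost R, glt (m * B) C := by
  by_cases hB0 : B = 0
  · refine ⟨eps R, hR.eps_mem_ghost, ?_⟩
    rw [hB0, mul_zero]
    exact zero_glt hC.2
  obtain ⟨d, hd, hde⟩ := hR.exists_glt_eps hnt
  obtain ⟨B', hB', hBB'⟩ := hR.exists_mul_eq_eps ⟨⟨B, hB⟩, hB0⟩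
  refine ⟨C * B' * d, hR.mul_mem_ghost (hR.mul_mem_ghost hC hB') hd, ?_⟩
  convert hR.glt_mul_left hC.2 (hR.eps_mul_of_mem_ghost hd) hR.1.eps_mul_eps_s3 hde using 1
  · rw [show C * B' * d * B = C * (eps R * d) by rw [← hBB']; ring, hR.eps_mul_of_mem_ghost hd]
  · exact (mul_eps_of_eps_mul_eq (hR.eps_mul_of_mem_ghost hC)).symm

theorem IsSupersemifield.exists_ghost_glt_mul_and_mul_glt (hR : IsSupersemifield R)
    (hnt : NontrivialG R) (hdense : DenseR R) (hA : eps R * A = A) (hB : eps R * B = B)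
    (hC : C ∈ ghost R) (h : glt (A * B) (C * C)) :
    ∃ m ∈ ghost R, glt A (m * C) ∧ glt (m * B) C := by
  -- `m` lies strictly between `A/C` and `C/B`; if `A = 0` or `B = 0` one bound is void.
  by_cases hA0 : A = 0
  · obtain ⟨m, hm, hmB⟩ := hR.exists_ghost_mul_glt hnt hB hC
    exact ⟨m, hm, hA0 ▸ zero_glt (hR.mul_mem_ghost hm hC).2, hmB⟩
  by_cases hB0 : B = 0
  · obtain ⟨m, hm, hAm⟩ := hR.exists_ghost_glt_mul hnt hA hC
    exact ⟨m, hm, hAm, by rw [hB0, mul_zero]; exact zero_glt hC.2⟩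
  have hAg : A ∈ ghost R := ⟨⟨A, hA⟩, hA0⟩
  have hBg : B ∈ ghost R := ⟨⟨B, hB⟩, hB0⟩
  have hC₀ := hR.eps_mul_of_mem_ghost hC
  obtain ⟨B', hB', hBB'⟩ := hR.exists_mul_eq_eps hBg
  obtain ⟨C', hC', hCC'⟩ := hR.exists_mul_eq_eps hC
  have hlt : glt (A * C') (C * B') := by
    convert hR.glt_mul_left (hR.mul_mem_ghost hB' hC').2 (by rw [← mul_assoc, hA])
      (by rw [← mul_assoc, hC₀]) h using 1
    · rw [← mul_eps_of_eps_mul_eq (hR.eps_mul_of_mem_ghost (hR.mul_mem_ghost hAg hC')), ← hBB']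
      ring
    · rw [← mul_eps_of_eps_mul_eq (hR.eps_mul_of_mem_ghost (hR.mul_mem_ghost hC hB')), ← hCC']
      ring
  obtain ⟨m, hm, hAm, hmB⟩ :=
    hR.exists_ghost_between hdense (hR.mul_mem_ghost hAg hC') (hR.mul_mem_ghost hC hB') hlt
  have hm₀ := hR.eps_mul_of_mem_ghost hm
  refine ⟨m, hm, ?_, ?_⟩
  · convert hR.glt_mul_left hC.2 (by rw [← mul_assoc, hA]) hm₀ hAm using 1
    · rw [mul_left_comm, hCC', mul_eps_of_eps_mul_eq hA]
    · exact mul_comm m C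
  · convert hR.glt_mul_left hBg.2 hm₀ (by rw [← mul_assoc, hC₀]) hmB using 1
    · exact mul_comm m B
    · rw [mul_left_comm, hBB', mul_eps_of_eps_mul_eq hC₀]

end GhostGroup

section Tangible

variable {R : Type*} [CommSemiring R]

theorem IsSupersemifield.eps_mul_mem_ghost (hR : IsSupersemifield R) (htan : TangibleSSF R)
    {a : R} (ha : a ≠ 0) : eps R * a ∈ ghost R := by
  by_cases h : a ∈ eSet R
  · rw [hR.1.eps_mul_of_mem_eSet h]
    exact ⟨h, ha⟩
  · rw [← htan]
    exact ⟨a, h, rfl⟩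

theorem IsSupersemifield.exists_isUnit_eps_mul_eq (hR : IsSupersemifield R)
    (htan : TangibleSSF R) {m : R} (hm : m ∈ ghost R) : ∃ a, IsUnit a ∧ eps R * a = m := by
  rw [← htan] at hm
  obtain ⟨a, ha, rfl⟩ := hm
  exact ⟨a, hR.2.1 a ha, rfl⟩

theorem IsSupersemifield.exists_isUnit_glt (hR : IsSupersemifield R) (htan : TangibleSSF R)
    (hnt : NontrivialG R) (hdense : DenseR R) {α β γ : R}
    (h : glt (eps R * (α * β)) (eps R * γ ^ 2)) :
    ∃ a, IsUnit a ∧ glt (eps R * (α + a ^ 2 * β)) (eps R * (a * γ)) := by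
  have hS := hR.1
  have hγ : eps R * γ ∈ ghost R :=
    hR.eps_mul_mem_ghost htan fun hγ0 => h.ne_zero (by simp [hγ0])
  obtain ⟨m, hm, hαm, hβm⟩ := hR.exists_ghost_glt_mul_and_mul_glt hnt hdense
    (hS.eps_mul_eps_mul_s3 α) (hS.eps_mul_eps_mul_s3 β) hγ
    (by rwa [hS.eps_mul_mul_eps_mul, hS.eps_mul_mul_eps_mul, ← sq])
  obtain ⟨a, ha, rfl⟩ := hR.exists_isUnit_eps_mul_eq htan hm
  refine ⟨a, ha, ?_⟩
  rw [mul_add, ← hS.eps_mul_mul_eps_mul a γ]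
  refine hS.glt_add (by rw [← mul_assoc, hS.eps_mul_eps_s3]) hαm ?_
  convert hR.glt_mul_left hm.2 (by rw [← mul_assoc, hS.eps_mul_eps_mul_s3]) (hS.eps_mul_eps_mul_s3 γ)
    hβm using 1
  rw [hS.eps_mul_mul_eps_mul, hS.eps_mul_mul_eps_mul, sq, mul_assoc]

end Tangible

section Quadratic

variable {R : Type*} [CommSemiring R] {V : Type*} [AddCommMonoid V] [Module R V]
  {q : V → R} {b : V → V → R}

theorem IsCompanion.map_smul_right (hb : IsCompanion q b) (a : R) (x y : V) :
    b x (a • y) = a * b x y := by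
  rw [hb.1, hb.2.2.1, hb.1]

theorem IsCompanion.apply_add_smul (hb : IsCompanion q b) (a : R) (x y : V) :
    q (x + a • y) = q x + q (a • y) + a * b x y := by
  rw [hb.2.2.2, hb.map_smul_right]

theorem IsQuadPair.apply_smul_add_smul (hqb : IsQuadPair q b) (a c : R) (x y : V) :
    q (a • x + c • y) = binaryForm (q x) (q y) (b x y) a c := by
  rw [hqb.2.2.2.2, hqb.1, hqb.1, hqb.2.2.2.1, hqb.2.map_smul_right, ← mul_assoc]
  rfl

end Quadratic

/-- over a dense nontrivial tangible supersemifield, `q` is quasilinear on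
`Rx + Ry` iff `e·b(x,y)² ≤ e·q(x)q(y)`, and if `e·b(x,y)² > e·q(x)q(y)` then `q` is
rigid at `(x,y)`. -/
theorem stmt3 {R : Type*} [CommSemiring R] (hssf : IsSupersemifield R)
    (htan : TangibleSSF R) (hnt : NontrivialG R) (hdense : DenseR R)
    {V : Type*} [AddCommMonoid V] [Module R V] (q : V → R) (b : V → V → R)
    (hqb : IsQuadPair q b) (x y : V) :
    (QuasilinearOn q (Submodule.span R {x, y}) ↔
      gle (eps R * (b x y) ^ 2) (eps R * (q x * q y))) ∧
    (glt (eps R * (q x * q y)) (eps R * (b x y) ^ 2) →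
      ∀ b' : V → V → R, IsCompanion q b' → b' x y = b x y) := by
  have hS := hssf.1
  refine ⟨⟨fun hql => ?_, fun hCS => ?_⟩, fun hlt b' hb' => ?_⟩
  · by_contra hCS
    obtain ⟨a, -, hdom⟩ := hssf.exists_isUnit_glt htan hnt hdense
      ((hS.glt_or_gle (hS.eps_mul_eps_mul_s3 _)).resolve_right hCS)
    have hadd := hql x (Submodule.subset_span (by simp)) (a • y)
      (Submodule.smul_mem _ a (Submodule.subset_span (by simp)))
    rw [hqb.2.apply_add_smul, hqb.1] at hadd
    exact hS.add_ne_left_of_glt hdom hadd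
  · intro u hu v hv
    obtain ⟨a₁, a₂, rfl⟩ := Submodule.mem_span_pair.mp hu
    obtain ⟨c₁, c₂, rfl⟩ := Submodule.mem_span_pair.mp hv
    rw [add_add_add_comm, ← add_smul, ← add_smul]
    simp only [hqb.apply_smul_add_smul]
    exact hssf.binaryForm_add hCS a₁ a₂ c₁ c₂
  · obtain ⟨a, ha, hdom⟩ := hssf.exists_isUnit_glt htan hnt hdense hlt
    have hq := hqb.2.apply_add_smul a x y
    have hq' := hb'.apply_add_smul a x y
    rw [hqb.1] at hq hq'
    rw [hS.add_eq_right_of_glt hdom] at hq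
    exact ha.mul_left_cancel (hS.eq_of_eq_add_of_glt hdom (hq.symm.trans hq'))

end Supertrop
end

section
/- Let R be a supertropical semiring, V a free R-module with base (ε_i)_{i∈I}, and q a quadratic form on V. If x ∈ V \ {0} is q-minimal, then |supp(x)| ≤ 2 if q(x) ∈ 𝒯(R), and |supp(x)| ≤ 4 if q(x) ∈ 𝒢(R). -/
/-!
Write `x = ∑_{i ∈ S} xᵢεᵢ` over its support `S`; then `q x` is a sum over the unordered pairs
`{i, j} ⊆ S` of the terms `q(xᵢεᵢ)` and `b(xᵢεᵢ, xⱼεⱼ)`. In a supertropical semiring any finite sum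
equals the sum of at most two of its terms, and of at most one if the sum is tangible. If `J ⊆ S`
is the set of indices occurring in these terms, then `q(x(J)) ≥ q(x) ≥ q(x(J))` in the minimal
ordering, which is antisymmetric here; so `q(x(J)) = q(x)` and `q`-minimality forces `x(J) = x`,
i.e. `J = S`, whence `|S| ≤ 2` resp. `|S| ≤ 4`.
-/

open scoped Classical

namespace Supertrop

section Supertropical

variable {R : Type*} [CommSemiring R]

theorem mle_sum_of_subset {M γ : Type*} [AddCommMonoid M] {J K : Finset γ} (h : J ⊆ K)
    (f : γ → M) : mle (∑ p ∈ J, f p) (∑ p ∈ K, f p) :=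
  ⟨∑ p ∈ K \ J, f p, by rw [← Finset.sum_union Finset.disjoint_sdiff,
    Finset.union_sdiff_of_subset h]⟩

theorem eps_mul_eq_add_self (a : R) : eps R * a = a + a := by rw [eps, add_mul, one_mul]

namespace IsSupertropical

theorem eps_mul_add_eps_mul (hR : IsSupertropical R) (a : R) :
    eps R * a + eps R * a = eps R * a := by
  rw [← add_mul, hR.1]

theorem add_eq_left_or_right_or_eps_mul (hR : IsSupertropical R) (a w : R) :
    a + w = a ∨ a + w = w ∨ a + w = eps R * w := by
  by_cases h : eps R * a = eps R * w
  · exact Or.inr (Or.inr (hR.2.2 a w h))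
  · exact (hR.2.1 a w h).imp_right Or.inl

theorem add_eq_left_or_right_of_mem_tangible (hR : IsSupertropical R) {a w : R}
    (h : a + w ∈ tangible R) : a + w = a ∨ a + w = w := by
  rcases hR.add_eq_left_or_right_or_eps_mul a w with h' | h' | h'
  · exact Or.inl h'
  · exact Or.inr h'
  · exact (h ⟨w, h'.symm⟩).elim

theorem add_eq_left_of_add_eps_mul_eq_left (hR : IsSupertropical R) {u w : R}
    (h : u + eps R * w = u) : u + w = u := by
  by_cases huw : eps R * u = eps R * w
  · have hu : u = eps R * w := by
      rw [← h, hR.2.2 u (eps R * w) (by rw [huw, hR.eps_mul_eps_mul]), hR.eps_mul_eps_mul]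
    rw [hR.2.2 u w huw, ← hu]
  · refine (hR.2.1 u w huw).resolve_right fun huw' => huw ?_
    have hu : u = eps R * w := by rw [← h, eps_mul_eq_add_self, ← add_assoc, huw']
    rw [hu, hR.eps_mul_eps_mul]

theorem add_add_eq_add_of_three (hR : IsSupertropical R) (u v w : R) :
    u + v + w = u + v ∨ u + v + w = u + w ∨ u + v + w = v + w := by
  rw [add_assoc]
  rcases hR.add_eq_left_or_right_or_eps_mul v w with hvw | hvw | hvw
  · exact Or.inl (by rw [hvw])
  · exact Or.inr (Or.inl (by rw [hvw]))
  rw [hvw]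
  rcases hR.add_eq_left_or_right_or_eps_mul u (eps R * w) with h | h | h
  · exact Or.inr (Or.inl (by rw [h, hR.add_eq_left_of_add_eps_mul_eq_left h]))
  · exact Or.inr (Or.inr h)
  · exact Or.inr (Or.inr (by rw [h, hR.eps_mul_eps_mul]))

theorem eps_mul_eq_of_mle_of_mle (hR : IsSupertropical R) {a b : R} (hab : mle a b)
    (hba : mle b a) : eps R * a = eps R * b := by
  obtain ⟨z, hz⟩ := hab
  obtain ⟨w, hw⟩ := hba
  have hz' : eps R * a + eps R * z = eps R * b := by rw [← mul_add, hz]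
  have hw' : eps R * b + eps R * w = eps R * a := by rw [← mul_add, hw]
  calc eps R * a = eps R * b + eps R * b + eps R * w := by rw [hR.eps_mul_add_eps_mul, hw']
    _ = eps R * a + eps R * a + eps R * z := by rw [add_assoc, hw', add_comm, ← hz', add_assoc]
    _ = eps R * b := by rw [hR.eps_mul_add_eps_mul, hz']

theorem eq_or_eq_eps_mul_of_add_eq (hR : IsSupertropical R) {a b z : R}
    (hab : eps R * a = eps R * b) (h : a + z = b) : b = a ∨ b = eps R * a := by
  by_cases haz : eps R * a = eps R * z
  · exact Or.inr (by rw [← h, hR.2.2 a z haz, ← haz])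
  · rcases hR.2.1 a z haz with h' | h'
    · exact Or.inl (h.symm.trans h')
    · exact (haz (by rw [hab, ← h, h'])).elim

theorem mle_antisymm (hR : IsSupertropical R) {a b : R} (hab : mle a b) (hba : mle b a) :
    a = b := by
  have he := hR.eps_mul_eq_of_mle_of_mle hab hba
  obtain ⟨z, hz⟩ := hab
  obtain ⟨w, hw⟩ := hba
  rcases hR.eq_or_eq_eps_mul_of_add_eq he hz with h | h
  · exact h.symm
  rcases hR.eq_or_eq_eps_mul_of_add_eq he.symm hw with h' | h'
  · exact h'
  rw [h', h, hR.eps_mul_eps_mul]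

theorem exists_subset_card_le_two_sum_eq (hR : IsSupertropical R) {γ : Type*} (K : Finset γ)
    (f : γ → R) : ∃ J ⊆ K, J.card ≤ 2 ∧ ∑ p ∈ J, f p = ∑ p ∈ K, f p := by
  induction K using Finset.cons_induction with
  | empty => exact ⟨∅, Finset.Subset.refl _, by simp⟩
  | cons a K ha ih =>
    obtain ⟨J, hJK, hcard, hsum⟩ := ih
    have hJaK : J ⊆ Finset.cons a K ha := hJK.trans (Finset.subset_cons ha)
    rw [Finset.sum_cons, ← hsum]
    by_cases h1 : J.card ≤ 1
    · refine ⟨insert a J, Finset.insert_subset (Finset.mem_cons_self a K) hJaK,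
        (Finset.card_insert_le a J).trans (by omega), ?_⟩
      rw [Finset.sum_insert fun haJ => ha (hJK haJ)]
    obtain ⟨k₁, k₂, hk, rfl⟩ := Finset.card_eq_two.mp (by omega : J.card = 2)
    have hak₁ : a ≠ k₁ := fun h => ha (h ▸ hJK (by simp))
    have hak₂ : a ≠ k₂ := fun h => ha (h ▸ hJK (by simp))
    have haK : ∀ k ∈ ({k₁, k₂} : Finset γ), ({a, k} : Finset γ) ⊆ Finset.cons a K ha :=
      fun k hk => Finset.insert_subset (Finset.mem_cons_self a K)
        (Finset.singleton_subset_iff.mpr (hJaK hk))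
    rw [Finset.sum_pair hk, ← add_assoc]
    rcases hR.add_add_eq_add_of_three (f a) (f k₁) (f k₂) with h | h | h
    · exact ⟨{a, k₁}, haK k₁ (by simp), by simp [hak₁], by rw [Finset.sum_pair hak₁, h]⟩
    · exact ⟨{a, k₂}, haK k₂ (by simp), by simp [hak₂], by rw [Finset.sum_pair hak₂, h]⟩
    · exact ⟨{k₁, k₂}, hJaK, by simp [hk], by rw [Finset.sum_pair hk, h]⟩

theorem exists_subset_card_le_one_sum_eq_of_mem_tangible (hR : IsSupertropical R) {γ : Type*}
    (K : Finset γ) (f : γ → R) (hK : ∑ p ∈ K, f p ∈ tangible R) :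
    ∃ J ⊆ K, J.card ≤ 1 ∧ ∑ p ∈ J, f p = ∑ p ∈ K, f p := by
  obtain ⟨J, hJK, hcard, hsum⟩ := hR.exists_subset_card_le_two_sum_eq K f
  by_cases h1 : J.card ≤ 1
  · exact ⟨J, hJK, h1, hsum⟩
  obtain ⟨p₁, p₂, hp, rfl⟩ := Finset.card_eq_two.mp (by omega : J.card = 2)
  rw [Finset.sum_pair hp] at hsum
  rcases hR.add_eq_left_or_right_of_mem_tangible (hsum ▸ hK) with h | h
  · exact ⟨{p₁}, Finset.singleton_subset_iff.mpr (hJK (by simp)), by simp,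
      by rw [Finset.sum_singleton, ← hsum, h]⟩
  · exact ⟨{p₂}, Finset.singleton_subset_iff.mpr (hJK (by simp)), by simp,
      by rw [Finset.sum_singleton, ← hsum, h]⟩

end IsSupertropical

end Supertropical

section Quadratic

variable {R : Type*} [CommSemiring R] {V : Type*} [AddCommMonoid V] [Module R V]
  {q : V → R} {b : V → V → R}

theorem IsCompanion.mle_apply (hb : IsCompanion q b) {x y : V} (h : mle y x) :
    mle (q y) (q x) := by
  obtain ⟨z, rfl⟩ := h
  exact ⟨q z + b y z, by rw [hb.2.2.2, add_assoc]⟩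

theorem IsCompanion.apply_sum_left (hb : IsCompanion q b) {ι : Type*} (v : ι → V)
    (J : Finset ι) (w : V) : b (∑ i ∈ J, v i) w = ∑ i ∈ J, b (v i) w := by
  induction J using Finset.cons_induction with
  | empty => simpa using hb.2.2.1 0 w w
  | cons a J ha ih => rw [Finset.sum_cons, Finset.sum_cons, hb.2.1, ih]

theorem IsQuadPair.exists_apply_sum_eq_sum_sym2 (hq : IsQuadPair q b) {ι : Type*}
    (v : ι → V) : ∃ F : Sym2 ι → R, ∀ J : Finset ι, q (∑ i ∈ J, v i) = ∑ p ∈ J.sym2, F p := by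
  obtain ⟨hsmul, hb⟩ := hq
  refine ⟨Sym2.lift ⟨fun i j => if i = j then q (v i) else b (v i) (v j), fun i j => ?_⟩,
    fun J => ?_⟩
  · by_cases h : i = j
    · subst h; rfl
    · simp only [if_neg h, if_neg (Ne.symm h), hb.1]
  induction J using Finset.cons_induction with
  | empty => simpa using hsmul 0 0
  | cons a J ha ih =>
    rw [Finset.sum_cons, hb.2.2.2, ih, Finset.sym2_cons, Finset.sum_disjUnion, Finset.sum_map,
      Finset.sum_cons, hb.1, hb.apply_sum_left]
    simp only [Sym2.mkEmbedding_apply, Sym2.lift_mk, if_true]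
    rw [Finset.sum_congr rfl fun i (hi : i ∈ J) => if_neg fun h : a = i => ha (h ▸ hi)]
    simp only [hb.1 (v a)]
    ring

end Quadratic

section MinimalVector

variable {R : Type*} [CommSemiring R] {V : Type*} [AddCommMonoid V] [Module R V]
  {q : V → R} {b : V → V → R} {ι : Type*} (bV : Module.Basis ι R V) {x : V}

theorem restrict_support (x : V) : restrict bV x (bV.repr x).support = x := by
  simpa [restrict, Finsupp.linearCombination_apply, Finsupp.sum] using bV.linearCombination_repr x

theorem mle_restrict {J : Finset ι} (hJ : J ⊆ (bV.repr x).support) : mle (restrict bV x J) x := by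
  have h : mle (restrict bV x J) (restrict bV x (bV.repr x).support) := mle_sum_of_subset hJ _
  rwa [restrict_support] at h

theorem repr_restrict_apply_of_notMem (x : V) {J : Finset ι} {k : ι} (hk : k ∉ J) :
    bV.repr (restrict bV x J) k = 0 := by
  simp only [restrict, map_sum, map_smul, Module.Basis.repr_self, Finsupp.coe_finsetSum,
    Finset.sum_apply, Finsupp.smul_apply, Finsupp.single_apply]
  exact Finset.sum_eq_zero fun i hi => by rw [if_neg fun h : i = k => hk (h ▸ hi), smul_zero]

theorem QMinimal.support_subset_of_mle_apply_restrict (hR : IsSupertropical R)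
    (hb : IsCompanion q b) (hmin : QMinimal q x) {J : Finset ι} (hJ : J ⊆ (bV.repr x).support)
    (h : mle (q x) (q (restrict bV x J))) : (bV.repr x).support ⊆ J := by
  have hle := mle_restrict bV hJ
  have hrx : restrict bV x J = x := by
    by_contra hne
    exact (hmin _ ⟨hle, hne⟩).2 (hR.mle_antisymm (hb.mle_apply hle) h)
  intro k hk
  by_contra hkJ
  exact Finsupp.mem_support_iff.mp hk (hrx ▸ repr_restrict_apply_of_notMem bV x hkJ)

theorem QMinimal.card_support_le_two_mul (hR : IsSupertropical R) (hb : IsCompanion q b)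
    (hmin : QMinimal q x) {F : Sym2 ι → R}
    (hF : ∀ J, q (restrict bV x J) = ∑ p ∈ J.sym2, F p) {T : Finset (Sym2 ι)}
    (hT : T ⊆ (bV.repr x).support.sym2) (hsum : ∑ p ∈ T, F p = q x) :
    (bV.repr x).support.card ≤ 2 * T.card := by
  set J := T.biUnion Sym2.toFinset
  have hJ : J ⊆ (bV.repr x).support := Finset.biUnion_subset.mpr fun p hp i hi =>
    Finset.mem_sym2_iff.mp (hT hp) i (Sym2.mem_toFinset.mp hi)
  have hTJ : T ⊆ J.sym2 := fun p hp => Finset.mem_sym2_iff.mpr fun i hi =>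
    Finset.mem_biUnion.mpr ⟨p, hp, Sym2.mem_toFinset.mpr hi⟩
  have hsupp := hmin.support_subset_of_mle_apply_restrict bV hR hb hJ
    (by rw [hF, ← hsum]; exact mle_sum_of_subset hTJ F)
  calc (bV.repr x).support.card ≤ J.card := Finset.card_le_card hsupp
    _ ≤ ∑ p ∈ T, p.toFinset.card := Finset.card_biUnion_le
    _ ≤ ∑ p ∈ T, 2 := Finset.sum_le_sum fun p _ => by rw [Sym2.card_toFinset]; split_ifs <;> omega
    _ = 2 * T.card := by rw [Finset.sum_const, smul_eq_mul, mul_comm]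

end MinimalVector

theorem stmt11_general {R : Type*} [CommSemiring R] (hR : IsSupertropical R)
    {V : Type*} [AddCommMonoid V] [Module R V] {ι : Type*} (bV : Module.Basis ι R V)
    (q : V → R) (hq : IsQuadForm q) (x : V) (hmin : QMinimal q x) :
    (q x ∈ tangible R → (bV.repr x).support.card ≤ 2) ∧
    (q x ∈ ghost R → (bV.repr x).support.card ≤ 4) := by
  obtain ⟨b, hq⟩ := hq
  obtain ⟨F, hF⟩ := hq.exists_apply_sum_eq_sum_sym2 fun i => bV.repr x i • bV i
  have hqx : ∑ p ∈ (bV.repr x).support.sym2, F p = q x := by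
    rw [← hF]
    exact congrArg q (restrict_support bV x)
  refine ⟨fun htan => ?_, fun _ => ?_⟩
  · obtain ⟨T, hT, hcard, hsum⟩ :=
      hR.exists_subset_card_le_one_sum_eq_of_mem_tangible _ F (hqx ▸ htan)
    have := hmin.card_support_le_two_mul bV hR hq.2 hF hT (hsum.trans hqx)
    omega
  · obtain ⟨T, hT, hcard, hsum⟩ := hR.exists_subset_card_le_two_sum_eq _ F
    have := hmin.card_support_le_two_mul bV hR hq.2 hF hT (hsum.trans hqx)
    omega

/-- a `q`-minimal vector has support of size at most `2` if `q(x)` is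
tangible, and at most `4` if `q(x)` is ghost. -/
theorem stmt11 {R : Type*} [CommSemiring R] (hR : IsSupertropical R)
    {V : Type*} [AddCommMonoid V] [Module R V] {ι : Type*} (bV : Module.Basis ι R V)
    (q : V → R) (hq : IsQuadForm q) (x : V) (hx : x ≠ 0) (hmin : QMinimal q x) :
    (q x ∈ tangible R → (bV.repr x).support.card ≤ 2) ∧
    (q x ∈ ghost R → (bV.repr x).support.card ≤ 4) :=
  stmt11_general hR bV q hq x hmin

end Supertrop
end
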